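/- Let X₀*, X₁*, …, X_B* be random variables constructed as follows: X₀* has distribution π, Y* is obtained by running a π-reversible Markov kernel K for T steps from X₀*, and X₁*, …, X_B* are obtained by independently running the time-reversal of K for T steps from Y*, conditionally independent given Y*. Then (X₀*, X₁*, …, X_B*) is exchangeable. -/

import Mathlib

open MeasureTheory ProbabilityTheory Finset
open scoped ENNReal

/-!
Reversibility of `K` says that `π ⊗ₘ K` is invariant under swapping the two coordinates. This
passes to every power `K ^ T` because the powers commute with `K`. Reading the pair `(X₀*, Y*)`
backwards, `Y*` has law `π` and `X₀*` is drawn from `K ^ T` started at `Y*`, just like the other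
`Xᵢ*`. So the law of `(X₀*, …, X_B*)` is the mixture `∫ ∏ᵢ (K ^ T)(y, ·) dπ(y)` of i.i.d. laws,
which is invariant under permuting the coordinates.
-/

namespace ProbabilityTheory.Kernel

variable {α : Type*} [MeasurableSpace α] {κ η : Kernel α α} {π : Measure α}

instance isFiniteKernel_pow [IsFiniteKernel κ] (n : ℕ) : IsFiniteKernel (κ ^ n) := by
  induction n with
  | zero => rw [pow_zero]; exact inferInstanceAs (IsFiniteKernel Kernel.id)
  | succ n ih => rw [pow_succ']; exact IsFiniteKernel.comp κ (κ ^ n)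

lemma isReversible_id : IsReversible Kernel.id π := by
  intro A B hA hB
  simp_rw [id_apply, Measure.dirac_apply' _ hB, Measure.dirac_apply' _ hA,
    lintegral_indicator_one hB, lintegral_indicator_one hA, Measure.restrict_apply hB,
    Measure.restrict_apply hA, Set.inter_comm]

lemma IsReversible.map_swap_compProd [IsFiniteMeasure π] [IsFiniteKernel κ]
    (h : IsReversible κ π) : (π ⊗ₘ κ).map Prod.swap = π ⊗ₘ κ := by
  refine Measure.ext_prod fun {A B} hA hB => ?_
  rw [Measure.map_apply measurable_swap (hA.prod hB), Set.preimage_swap_prod,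
    Measure.compProd_apply_prod hB hA, Measure.compProd_apply_prod hA hB, h hB hA]

lemma IsReversible.lintegral_mul_lintegral [IsFiniteMeasure π] [IsFiniteKernel κ]
    (h : IsReversible κ π) {f g : α → ℝ≥0∞} (hf : Measurable f) (hg : Measurable g) :
    ∫⁻ x, f x * ∫⁻ y, g y ∂κ x ∂π = ∫⁻ x, g x * ∫⁻ y, f y ∂κ x ∂π := by
  have hfg : Measurable fun p : α × α => f p.1 * g p.2 := by fun_prop
  have hgf : Measurable fun p : α × α => g p.1 * f p.2 := by fun_prop
  calc ∫⁻ x, f x * ∫⁻ y, g y ∂κ x ∂π = ∫⁻ p, f p.1 * g p.2 ∂(π ⊗ₘ κ) := by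
        simp_rw [Measure.lintegral_compProd hfg, lintegral_const_mul _ hg]
    _ = ∫⁻ p, f p.1 * g p.2 ∂((π ⊗ₘ κ).map Prod.swap) := by rw [h.map_swap_compProd]
    _ = ∫⁻ p, g p.1 * f p.2 ∂(π ⊗ₘ κ) := by
        rw [MeasureTheory.lintegral_map hfg measurable_swap]
        exact lintegral_congr fun _ => mul_comm _ _
    _ = ∫⁻ x, g x * ∫⁻ y, f y ∂κ x ∂π := by
        simp_rw [Measure.lintegral_compProd hgf, lintegral_const_mul _ hf]

lemma IsReversible.setLIntegral_lintegral [IsFiniteMeasure π] [IsFiniteKernel κ]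
    (h : IsReversible κ π) {A : Set α} (hA : MeasurableSet A) {g : α → ℝ≥0∞}
    (hg : Measurable g) :
    ∫⁻ x in A, ∫⁻ y, g y ∂κ x ∂π = ∫⁻ x, g x * κ x A ∂π := by
  calc ∫⁻ x in A, ∫⁻ y, g y ∂κ x ∂π = ∫⁻ x, A.indicator 1 x * ∫⁻ y, g y ∂κ x ∂π := by
        rw [← lintegral_indicator hA]
        exact lintegral_congr fun x => by by_cases hx : x ∈ A <;> simp [hx]
    _ = ∫⁻ x, g x * ∫⁻ y, A.indicator 1 y ∂κ x ∂π :=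
        h.lintegral_mul_lintegral (measurable_one.indicator hA) hg
    _ = ∫⁻ x, g x * κ x A ∂π := by simp_rw [lintegral_indicator_one hA]

lemma IsReversible.comp [IsFiniteMeasure π] [IsFiniteKernel κ] [IsFiniteKernel η]
    (hκ : IsReversible κ π) (hη : IsReversible η π) (hcomm : η ∘ₖ κ = κ ∘ₖ η) :
    IsReversible (η ∘ₖ κ) π := by
  intro A B hA hB
  calc ∫⁻ x in A, (η ∘ₖ κ) x B ∂π = ∫⁻ x in A, ∫⁻ y, η y B ∂κ x ∂π := by
        simp_rw [comp_apply' _ _ _ hB]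
    _ = ∫⁻ x, κ x A * η x B ∂π :=
        (hκ.setLIntegral_lintegral hA (η.measurable_coe hB)).trans
          (lintegral_congr fun _ => mul_comm _ _)
    _ = ∫⁻ x in B, ∫⁻ y, κ y A ∂η x ∂π :=
        (hη.setLIntegral_lintegral hB (κ.measurable_coe hA)).symm
    _ = ∫⁻ x in B, (η ∘ₖ κ) x A ∂π := by simp_rw [hcomm, comp_apply' _ _ _ hA]

lemma IsReversible.pow [IsFiniteMeasure π] [IsFiniteKernel κ] (h : IsReversible κ π) :
    ∀ n : ℕ, IsReversible (κ ^ n) π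
  | 0 => by rw [pow_zero]; exact isReversible_id
  | n + 1 => by
    rw [pow_succ]
    exact h.comp (h.pow n) (pow_mul_comm' κ n)

end ProbabilityTheory.Kernel

lemma MeasureTheory.Measure.map_comp_perm_eq_self {ι E : Type*} [Fintype ι]
    [MeasurableSpace E] {μ : Measure (ι → E)} [IsFiniteMeasure μ] (σ : Equiv.Perm ι)
    (h : ∀ A : ι → Set E, (∀ i, MeasurableSet (A i)) →
      μ (Set.univ.pi (A ∘ σ)) = μ (Set.univ.pi A)) :
    μ.map (fun x => x ∘ σ) = μ := by
  have hσ : Measurable fun x : ι → E => x ∘ σ := by fun_prop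
  refine ext_of_generate_finite _ generateFrom_pi.symm isPiSystem_pi ?_
    (by rw [Measure.map_apply hσ .univ, Set.preimage_univ])
  rintro _ ⟨A, hA, rfl⟩
  have hA' : ∀ i, MeasurableSet (A i) := fun i => hA i (Set.mem_univ i)
  have hpre : (fun x : ι → E => x ∘ σ) ⁻¹' Set.univ.pi A = Set.univ.pi (A ∘ σ.symm) := by
    ext x
    simp only [Set.mem_preimage, Set.mem_univ_pi, Function.comp_apply]
    exact ⟨fun hx i => by simpa using hx (σ.symm i), fun hx i => by simpa using hx (σ i)⟩
  have hAσ := h (A ∘ σ.symm) fun i => hA' _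
  rw [Function.comp_assoc, Equiv.symm_comp_self, Function.comp_id] at hAσ
  rw [Measure.map_apply hσ (.univ_pi hA'), hpre, hAσ]

theorem besag_exchangeable_general
    (E : Type*) [MeasurableSpace E]
    (K : ProbabilityTheory.Kernel E E) [ProbabilityTheory.IsMarkovKernel K]
    (π : MeasureTheory.Measure E) [MeasureTheory.IsProbabilityMeasure π]
    -- reversibility of K with respect to π
    (hrev : ∀ A B : Set E, MeasurableSet A → MeasurableSet B →
      ∫⁻ x in A, K x B ∂π = ∫⁻ x in B, K x A ∂π)
    (T B : ℕ)
    -- the T-step kernel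
    (KT : ProbabilityTheory.Kernel E E)
    (iter : ℕ → ProbabilityTheory.Kernel E E)
    (hiter0 : iter 0 = ProbabilityTheory.Kernel.id)
    (hiterS : ∀ t, iter (t + 1) = K ∘ₖ iter t)
    (hKT : KT = iter T)
    -- the underlying probability space and the random variables
    (Ω : Type*) [MeasurableSpace Ω] (Pr : MeasureTheory.Measure Ω)
    [MeasureTheory.IsProbabilityMeasure Pr]
    (X : Fin (B + 1) → Ω → E) (Y : Ω → E)
    (hXmeas : ∀ i, Measurable (X i))
    -- joint law: X₀ ~ π, Y | X₀ ~ KT, and X₁,…,X_B iid ~ KT(Y,·) given Y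
    (hjoint : ∀ (A : Fin (B + 1) → Set E) (C : Set E),
      (∀ i, MeasurableSet (A i)) → MeasurableSet C →
      Pr {ω | (∀ i, X i ω ∈ A i) ∧ Y ω ∈ C} =
        ∫⁻ x₀ in A 0, ∫⁻ y in C, ∏ i : Fin B, KT y (A i.succ) ∂(KT x₀) ∂π) :
    -- exchangeability
    ∀ σ : Equiv.Perm (Fin (B + 1)),
      MeasureTheory.Measure.map (fun ω (i : Fin (B + 1)) => X (σ i) ω) Pr =
        MeasureTheory.Measure.map (fun ω (i : Fin (B + 1)) => X i ω) Pr := by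
  intro σ
  have hiter : ∀ t, iter t = K ^ t := by
    intro t
    induction t with
    | zero => exact hiter0
    | succ t ih => rw [hiterS, ih, pow_succ']; rfl
  obtain rfl : KT = K ^ T := hKT.trans (hiter T)
  have hrevT : (K ^ T).IsReversible π := Kernel.IsReversible.pow (fun _ _ => hrev _ _) T
  have hX : Measurable fun ω i => X i ω := measurable_pi_lambda _ hXmeas
  have hlaw : ∀ A : Fin (B + 1) → Set E, (∀ i, MeasurableSet (A i)) →
      Pr.map (fun ω i => X i ω) (Set.univ.pi A) = ∫⁻ x, ∏ i, (K ^ T) x (A i) ∂π := by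
    intro A hA
    have hprod : Measurable fun y => ∏ i : Fin B, (K ^ T) y (A i.succ) :=
      Finset.measurable_prod _ fun i _ => (K ^ T).measurable_coe (hA i.succ)
    rw [Measure.map_apply hX (.univ_pi hA)]
    simpa [Set.preimage, Set.mem_univ_pi, Fin.prod_univ_succ, mul_comm,
      hrevT.setLIntegral_lintegral (hA 0) hprod]
      using hjoint A Set.univ hA .univ
  calc Pr.map (fun ω i => X (σ i) ω)
      = (Pr.map fun ω i => X i ω).map (fun x => x ∘ σ) :=
        (Measure.map_map (measurable_pi_lambda _ fun i => measurable_pi_apply (σ i)) hX).symm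
    _ = Pr.map fun ω i => X i ω := Measure.map_comp_perm_eq_self σ fun A hA => by
        rw [hlaw (A ∘ σ) fun i => hA _, hlaw A hA]
        exact lintegral_congr fun x => Equiv.prod_comp σ fun i => (K ^ T) x (A i)

/-- Besag's construction: `X₀* ~ π`, `Y*` is obtained by running a `π`-reversible Markov
kernel `K` for `T` steps from `X₀*`, and `X₁*, …, X_B*` are obtained by independently running
the time reversal of `K` (which equals `K` by reversibility) for `T` steps from `Y*`,
conditionally independent given `Y*`. Then `(X₀*, X₁*, …, X_B*)` is exchangeable. -/
theorem besag_exchangeable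
    (E : Type*) [MeasurableSpace E]
    (K : ProbabilityTheory.Kernel E E) [ProbabilityTheory.IsMarkovKernel K]
    (π : MeasureTheory.Measure E) [MeasureTheory.IsProbabilityMeasure π]
    -- reversibility of K with respect to π
    (hrev : ∀ A B : Set E, MeasurableSet A → MeasurableSet B →
      ∫⁻ x in A, K x B ∂π = ∫⁻ x in B, K x A ∂π)
    (T B : ℕ) (hT : 0 < T) (hB : 0 < B)
    -- the T-step kernel
    (KT : ProbabilityTheory.Kernel E E)
    (iter : ℕ → ProbabilityTheory.Kernel E E)
    (hiter0 : iter 0 = ProbabilityTheory.Kernel.id)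
    (hiterS : ∀ t, iter (t + 1) = K ∘ₖ iter t)
    (hKT : KT = iter T)
    -- the underlying probability space and the random variables
    (Ω : Type*) [MeasurableSpace Ω] (Pr : MeasureTheory.Measure Ω)
    [MeasureTheory.IsProbabilityMeasure Pr]
    (X : Fin (B + 1) → Ω → E) (Y : Ω → E)
    (hXmeas : ∀ i, Measurable (X i)) (hYmeas : Measurable Y)
    -- joint law: X₀ ~ π, Y | X₀ ~ KT, and X₁,…,X_B iid ~ KT(Y,·) given Y
    (hjoint : ∀ (A : Fin (B + 1) → Set E) (C : Set E),
      (∀ i, MeasurableSet (A i)) → MeasurableSet C →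
      Pr {ω | (∀ i, X i ω ∈ A i) ∧ Y ω ∈ C} =
        ∫⁻ x₀ in A 0, ∫⁻ y in C, ∏ i : Fin B, KT y (A i.succ) ∂(KT x₀) ∂π) :
    -- exchangeability
    ∀ σ : Equiv.Perm (Fin (B + 1)),
      MeasureTheory.Measure.map (fun ω (i : Fin (B + 1)) => X (σ i) ω) Pr =
        MeasureTheory.Measure.map (fun ω (i : Fin (B + 1)) => X i ω) Pr :=
  besag_exchangeable_general E K π hrev T B KT iter hiter0 hiterS hKT Ω Pr X Y hXmeas hjoint
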